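/- In any MAG G that contains at least one directed or bidirected edge, there exists a vertex X with an arrowhead incident to it (at least one parent or spouse) such that X has no proper descendants; any such X has no children and no neighbors, and is removable in G. -/

import Mathlib

/-- A mixed graph with directed (`dir x y` : x → y), bidirected and undirected edges. -/
structure MixedGraph (V : Type*) where
  dir : V → V → Prop
  bi : V → V → Prop
  und : V → V → Prop
  bi_symm : ∀ x y, bi x y → bi y x
  und_symm : ∀ x y, und x y → und y x

namespace MixedGraph

variable {V : Type*}

def adj (G : MixedGraph V) (x y : V) : Prop :=
  G.dir x y ∨ G.dir y x ∨ G.bi x y ∨ G.und x y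

/-- There is an arrowhead at `y` on the edge between `x` and `y`. -/
def head (G : MixedGraph V) (x y : V) : Prop := G.dir x y ∨ G.bi x y

def pa (G : MixedGraph V) (x : V) : Set V := {y | G.dir y x}
def child (G : MixedGraph V) (x : V) : Set V := {y | G.dir x y}
def nbr (G : MixedGraph V) (x : V) : Set V := {y | G.und x y}
def spouse (G : MixedGraph V) (x : V) : Set V := {y | G.bi x y}

/-- `x` is an ancestor of `y` (every vertex is an ancestor of itself). -/
def anc (G : MixedGraph V) (x y : V) : Prop := Relation.ReflTransGen G.dir x y

def ancSet (G : MixedGraph V) (S : Set V) : Set V := {x | ∃ y ∈ S, G.anc x y}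

/-- The set of descendants of `x` (including `x` itself). -/
def desc (G : MixedGraph V) (x : V) : Set V := {y | G.anc x y}

/-- A path, encoded as a duplicate-free list of at least two vertices with
consecutive vertices adjacent. -/
def IsPath (G : MixedGraph V) (p : List V) : Prop :=
  p.Chain' G.adj ∧ p.Nodup ∧ 2 ≤ p.length

def IsPathBetween (G : MixedGraph V) (p : List V) (x y : V) : Prop :=
  G.IsPath p ∧ p.head? = some x ∧ p.getLast? = some y

/-- The vertex at (internal) position `i` of `p` is a collider: both incident
path edges have an arrowhead at it. -/
def ColliderAt (G : MixedGraph V) (p : List V) (i : ℕ) : Prop :=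
  ∃ a v c, p[i-1]? = some a ∧ p[i]? = some v ∧ p[i+1]? = some c ∧
    G.head a v ∧ G.head c v

/-- A collider path: every non-endpoint vertex is a collider. -/
def IsColliderPath (G : MixedGraph V) (p : List V) : Prop :=
  G.IsPath p ∧ ∀ i, 1 ≤ i → i + 1 < p.length → G.ColliderAt p i

/-- `p` is an m-connecting path between `x` and `y` relative to `Z`. -/
def MConn (G : MixedGraph V) (p : List V) (x y : V) (Z : Set V) : Prop :=
  G.IsPathBetween p x y ∧
  ∀ i v, 1 ≤ i → i + 1 < p.length → p[i]? = some v →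
    (G.ColliderAt p i → v ∈ G.ancSet ({x, y} ∪ Z)) ∧
    (¬ G.ColliderAt p i → v ∉ Z)

/-- `Z` m-separates `x` and `y` in `G`. -/
def MSep (G : MixedGraph V) (x y : V) (Z : Set V) : Prop :=
  ∀ p, ¬ G.MConn p x y Z

/-- Induced subgraph over a set `S` of vertices. -/
def induce (G : MixedGraph V) (S : Set V) : MixedGraph V where
  dir x y := G.dir x y ∧ x ∈ S ∧ y ∈ S
  bi x y := G.bi x y ∧ x ∈ S ∧ y ∈ S
  und x y := G.und x y ∧ x ∈ S ∧ y ∈ S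
  bi_symm := fun x y h => ⟨G.bi_symm x y h.1, h.2.2, h.2.1⟩
  und_symm := fun x y h => ⟨G.und_symm x y h.1, h.2.2, h.2.1⟩

/-- `X` is removable in `G`: the induced subgraph on the remaining vertices
imposes exactly the same m-separation relations over them as `G`. -/
def Removable (G : MixedGraph V) (X : V) : Prop :=
  ∀ Y W : V, Y ≠ X → W ≠ X → Y ≠ W →
    ∀ Z : Set V, Z ⊆ {v | v ≠ X ∧ v ≠ Y ∧ v ≠ W} →
      (G.MSep Y W Z ↔ (G.induce {v | v ≠ X}).MSep Y W Z)

/-- Ancestral: no directed cycles, no almost directed cycles, and endpoints of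
undirected edges have no parents or spouses. -/
def Ancestral (G : MixedGraph V) : Prop :=
  (∀ x y, G.dir x y → ¬ G.anc y x) ∧
  (∀ x y, G.bi x y → ¬ G.anc y x) ∧
  (∀ x y, G.und x y → ∀ z, ¬ G.dir z x ∧ ¬ G.bi z x)

/-- A maximal ancestral graph: ancestral, and any two non-adjacent vertices are
m-separated by some set. -/
def IsMAG (G : MixedGraph V) : Prop :=
  G.Ancestral ∧
  ∀ x y, x ≠ y → ¬ G.adj x y →
    ∃ Z : Set V, Z ⊆ {v | v ≠ x ∧ v ≠ y} ∧ G.MSep x y Z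

/-- Markov boundary of `x`: the vertices with a collider path to `x`. -/
def Mb (G : MixedGraph V) (x : V) : Set V :=
  {y | ∃ p, G.IsColliderPath p ∧ p.head? = some y ∧ p.getLast? = some x}

/-- District of `x`: vertices joined to `x` by a path of bidirected edges. -/
def district (G : MixedGraph V) (x : V) : Set V :=
  {y | Relation.ReflTransGen G.bi x y}

/-- `Pa⁺(x) = Pa(x) ∪ Dis(x) ∪ Pa(Dis(x)) ∪ N(x)`. -/
def paPlus (G : MixedGraph V) (x : V) : Set V :=
  G.pa x ∪ G.district x ∪ (⋃ y ∈ G.district x, G.pa y) ∪ G.nbr x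

noncomputable def deltaPlus [Fintype V] (G : MixedGraph V) : ℕ :=
  Finset.univ.sup fun z : V => (G.paPlus z).ncard

/-- Condition 1 of the graphical characterization of removability. -/
def RemCond1 (G : MixedGraph V) (X : V) : Prop :=
  ∀ Y Z : V, G.adj X Y → Z ∈ G.child X ∪ G.nbr X → Z ≠ Y → G.adj Y Z

/-- Condition 2 of the graphical characterization of removability. -/
def RemCond2 (G : MixedGraph V) (X : V) : Prop :=
  ∀ (p : List V) (Y Z : V), G.IsColliderPath p → p.head? = some X →
    p.getLast? = some Y → Z ∉ p → (∀ v ∈ p.dropLast, G.dir v Z) → G.adj Y Z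

end MixedGraph

/-!
Acyclicity of the directed part lets us follow directed edges in the finite graph until we reach a
vertex `X` without children; if we started at the head of an arrow, `X` still carries an arrowhead,
so the ancestral condition forbids undirected edges at `X`. Every edge at such an `X` points into
it, so `X` is a collider wherever it lies inside a path. On an m-connecting path it would then be an
ancestor of an endpoint or of the conditioning set, hence one of them, because `X` has no proper
descendants. So m-connecting paths avoid `X`, and they are the same paths, with the same ancestors
of colliders, in the graph with `X` deleted.
-/

theorem List.IsChain.forall_mem_of_rel {α : Type*} {R : α → α → Prop} {P : α → Prop}
    (hR : ∀ a b, R a b → P a ∧ P b) :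
    ∀ {l : List α}, l.IsChain R → 2 ≤ l.length → ∀ v ∈ l, P v
  | a :: b :: t, h, _, v, hv => by
    rw [List.isChain_cons_cons] at h
    rcases List.mem_cons.1 hv with rfl | hv
    · exact (hR _ _ h.1).1
    · cases t with
      | nil => rw [List.mem_singleton.1 hv]; exact (hR _ _ h.1).2
      | cons c t => exact forall_mem_of_rel hR h.2 (by simp) v hv

theorem List.exists_interior_getElem?_eq {α : Type*} {l : List α} {x y v : α}
    (hx : l.head? = some x) (hy : l.getLast? = some y) (hv : v ∈ l) (hvx : v ≠ x)
    (hvy : v ≠ y) : ∃ i, 1 ≤ i ∧ i + 1 < l.length ∧ l[i]? = some v := by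
  obtain ⟨i, hi, rfl⟩ := List.getElem_of_mem hv
  refine ⟨i, Nat.one_le_iff_ne_zero.2 fun h0 => hvx ?_, ?_, List.getElem?_eq_getElem hi⟩
  · subst h0
    rw [List.head?_eq_getElem?, List.getElem?_eq_getElem hi] at hx
    exact Option.some.inj hx
  · by_contra hlast
    rw [List.getLast?_eq_getElem?, List.getElem?_eq_getElem (by omega)] at hy
    exact hvy (by simpa [show l.length - 1 = i by omega] using hy)

namespace MixedGraph

variable {V : Type*} {G : MixedGraph V} {S T Z : Set V} {p : List V} {x y v X : V} {i : ℕ}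

theorem adj_comm : G.adj x y ↔ G.adj y x := by
  have := G.bi_symm x y; have := G.bi_symm y x
  have := G.und_symm x y; have := G.und_symm y x
  unfold adj; tauto

theorem adj_induce_iff : (G.induce S).adj x y ↔ G.adj x y ∧ x ∈ S ∧ y ∈ S := by
  simp only [adj, induce]; tauto

theorem head_induce_iff : (G.induce S).head x y ↔ G.head x y ∧ x ∈ S ∧ y ∈ S := by
  simp only [head, induce]; tauto

theorem anc_of_induce (h : (G.induce S).anc x y) : G.anc x y :=
  Relation.ReflTransGen.mono (fun _ _ (hd : (G.induce S).dir _ _) => hd.1) _ _ h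

theorem ancSet_induce_subset : (G.induce S).ancSet T ⊆ G.ancSet T :=
  fun _ ⟨w, hw, h⟩ => ⟨w, hw, anc_of_induce h⟩

theorem isPath_induce_iff : (G.induce S).IsPath p ↔ G.IsPath p ∧ ∀ v ∈ p, v ∈ S := by
  constructor
  · rintro ⟨hch, hnd, hlen⟩
    exact ⟨⟨List.IsChain.imp (fun _ _ h => (adj_induce_iff.1 h).1) hch, hnd, hlen⟩,
      List.IsChain.forall_mem_of_rel (R := (G.induce S).adj)
        (fun _ _ h => (adj_induce_iff.1 h).2) hch hlen⟩
  · rintro ⟨⟨hch, hnd, hlen⟩, hS⟩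
    exact ⟨List.IsChain.imp_of_mem_imp
      (fun _ _ ha hb h => adj_induce_iff.2 ⟨h, hS _ ha, hS _ hb⟩) hch, hnd, hlen⟩

theorem colliderAt_induce_iff (hS : ∀ v ∈ p, v ∈ S) :
    (G.induce S).ColliderAt p i ↔ G.ColliderAt p i := by
  constructor <;> rintro ⟨a, v, c, ha, hv, hc, hav, hcv⟩ <;> refine ⟨a, v, c, ha, hv, hc, ?_, ?_⟩
  · exact (head_induce_iff.1 hav).1
  · exact (head_induce_iff.1 hcv).1
  · exact head_induce_iff.2 ⟨hav, hS _ (List.mem_of_getElem? ha), hS _ (List.mem_of_getElem? hv)⟩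
  · exact head_induce_iff.2 ⟨hcv, hS _ (List.mem_of_getElem? hc), hS _ (List.mem_of_getElem? hv)⟩

theorem MConn.of_induce (h : (G.induce S).MConn p x y Z) : G.MConn p x y Z := by
  obtain ⟨⟨hpath, hx, hy⟩, hcond⟩ := h
  obtain ⟨hpath, hS⟩ := isPath_induce_iff.1 hpath
  refine ⟨⟨hpath, hx, hy⟩, fun i v hi hi' hv => ⟨fun hc => ?_, fun hc => ?_⟩⟩
  · exact ancSet_induce_subset ((hcond i v hi hi' hv).1 ((colliderAt_induce_iff hS).2 hc))
  · exact (hcond i v hi hi' hv).2 (mt (colliderAt_induce_iff hS).1 hc)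

theorem MConn.induce (h : G.MConn p x y Z) (hS : ∀ v ∈ p, v ∈ S)
    (hanc : G.ancSet ({x, y} ∪ Z) ⊆ (G.induce S).ancSet ({x, y} ∪ Z)) :
    (G.induce S).MConn p x y Z := by
  obtain ⟨⟨hpath, hx, hy⟩, hcond⟩ := h
  refine ⟨⟨isPath_induce_iff.2 ⟨hpath, hS⟩, hx, hy⟩, fun i v hi hi' hv => ⟨fun hc => ?_, fun hc => ?_⟩⟩
  · exact hanc ((hcond i v hi hi' hv).1 ((colliderAt_induce_iff hS).1 hc))
  · exact (hcond i v hi hi' hv).2 (mt (colliderAt_induce_iff hS).2 hc)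

theorem IsPath.colliderAt (hp : G.IsPath p) (hi : 1 ≤ i) (hi' : i + 1 < p.length)
    (hv : p[i]? = some v) (hhead : ∀ y, G.adj y v → G.head y v) : G.ColliderAt p i := by
  have hch : p.IsChain G.adj := hp.1
  have hprev : G.adj p[i - 1] p[i - 1 + 1] := hch.getElem (i - 1) (by omega)
  have hnext : G.adj p[i] p[i + 1] := hch.getElem i hi'
  simp only [show i - 1 + 1 = i by omega] at hprev
  obtain rfl : p[i] = v := Option.some.inj ((List.getElem?_eq_getElem (by omega)).symm.trans hv)
  exact ⟨_, _, _, List.getElem?_eq_getElem (by omega), hv, List.getElem?_eq_getElem hi',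
    hhead _ hprev, hhead _ (adj_comm.1 hnext)⟩

theorem head_of_adj (hch : G.child X = ∅) (hnb : G.nbr X = ∅) (h : G.adj y X) : G.head y X := by
  rcases h with h | h | h | h
  · exact Or.inl h
  · exact absurd h (Set.eq_empty_iff_forall_notMem.1 hch y)
  · exact Or.inr h
  · exact absurd (G.und_symm y X h) (Set.eq_empty_iff_forall_notMem.1 hnb y)

theorem eq_of_anc_of_child_eq_empty (hch : G.child X = ∅) (h : G.anc X y) : y = X := by
  rcases h.cases_head with h | ⟨c, hXc, _⟩
  · exact h.symm
  · exact absurd hXc (Set.eq_empty_iff_forall_notMem.1 hch c)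

theorem anc_induce_of_child_eq_empty (hch : G.child X = ∅) (h : G.anc x y) (hy : y ≠ X) :
    (G.induce {v | v ≠ X}).anc x y := by
  induction h with
  | refl => exact .refl
  | @tail c y _ hcy ih =>
    have hc : c ≠ X := fun hcX => (Set.eq_empty_iff_forall_notMem.1 hch y) (hcX ▸ hcy)
    exact (ih hc).tail ⟨hcy, hc, hy⟩

theorem ancSet_subset_ancSet_induce (hch : G.child X = ∅) (hT : X ∉ T) :
    G.ancSet T ⊆ (G.induce {v | v ≠ X}).ancSet T :=
  fun _ ⟨w, hw, h⟩ => ⟨w, hw, anc_induce_of_child_eq_empty hch h fun hwX => hT (hwX ▸ hw)⟩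

theorem removable_of_child_eq_empty_of_nbr_eq_empty (hch : G.child X = ∅)
    (hnb : G.nbr X = ∅) : G.Removable X := by
  intro Y W hY hW _ Z hZ
  have hT : X ∉ ({Y, W} ∪ Z : Set V) := by
    rintro ((hXY | hXW) | hXZ)
    exacts [hY hXY.symm, hW hXW.symm, (hZ hXZ).1 rfl]
  refine ⟨fun hsep p hp => hsep p hp.of_induce, fun hsep p hp =>
    hsep p (hp.induce ?_ (ancSet_subset_ancSet_induce hch hT))⟩
  rintro v hv rfl
  obtain ⟨i, hi, hi', hiv⟩ :=
    List.exists_interior_getElem?_eq hp.1.2.1 hp.1.2.2 hv hY.symm hW.symm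
  obtain ⟨w, hw, hvw⟩ :=
    (hp.2 i v hi hi' hiv).1 (hp.1.1.colliderAt hi hi' hiv fun _ => head_of_adj hch hnb)
  exact hT (eq_of_anc_of_child_eq_empty hch hvw ▸ hw)

theorem Ancestral.exists_anc_forall_anc_eq [Finite V] (hG : G.Ancestral) (x : V) :
    ∃ X, G.anc x X ∧ ∀ y, G.anc X y → y = X := by
  let properDesc : V → V → Prop := fun y x => Relation.TransGen G.dir x y
  have : IsTrans V properDesc := ⟨fun _ _ _ hab hbc => hbc.trans hab⟩
  have : Std.Irrefl properDesc := ⟨fun a h => by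
    obtain ⟨c, hac, hca⟩ := Relation.TransGen.head'_iff.1 h
    exact hG.1 a c hac hca⟩
  obtain ⟨X, hxX, hmax⟩ :=
    (Finite.wellFounded_of_trans_of_irrefl properDesc).has_min {y | G.anc x y} ⟨x, .refl⟩
  refine ⟨X, hxX, fun y hXy => ?_⟩
  rcases Relation.reflTransGen_iff_eq_or_transGen.1 hXy with h | h
  · exact h
  · exact absurd h (hmax y (hxX.trans hXy))

theorem exists_head_of_anc (hx : ∃ p, G.head p x) (h : G.anc x y) : ∃ p, G.head p y := by
  rcases h.cases_tail with rfl | ⟨c, _, hcy⟩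
  exacts [hx, ⟨c, Or.inl hcy⟩]

theorem Ancestral.child_eq_empty (hG : G.Ancestral) (hX : ∀ y, G.anc X y → y = X) :
    G.child X = ∅ :=
  Set.eq_empty_of_forall_notMem fun y hy => hG.1 X y hy (hX y (.single hy) ▸ .refl)

theorem Ancestral.nbr_eq_empty (hG : G.Ancestral) (hX : ∃ p, G.head p X) : G.nbr X = ∅ := by
  obtain ⟨p, hp⟩ := hX
  exact Set.eq_empty_of_forall_notMem fun y hy => hp.elim (hG.2.2 X y hy p).1 (hG.2.2 X y hy p).2

end MixedGraph

open MixedGraph in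
/-- in a MAG with at least one directed or bidirected edge,
there is a vertex `X` with an arrowhead incident to it and no proper
descendants; any such `X` has no children, no neighbors, and is removable. -/
theorem stmt11 {V : Type*} [Fintype V] (G : MixedGraph V) (hG : G.IsMAG)
    (hedge : ∃ x y : V, G.dir x y ∨ G.bi x y) :
    (∃ X : V, (∃ p : V, G.dir p X ∨ G.bi p X) ∧ (∀ y : V, G.anc X y → y = X)) ∧
    ∀ X : V, (∃ p : V, G.dir p X ∨ G.bi p X) → (∀ y : V, G.anc X y → y = X) →
      G.child X = ∅ ∧ G.nbr X = ∅ ∧ G.Removable X := by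
  obtain ⟨a, b, hab⟩ := hedge
  obtain ⟨X, hbX, hX⟩ := hG.1.exists_anc_forall_anc_eq b
  refine ⟨⟨X, exists_head_of_anc ⟨a, hab⟩ hbX, hX⟩, fun X hhead hX => ?_⟩
  have hch := hG.1.child_eq_empty hX
  have hnb := hG.1.nbr_eq_empty hhead
  exact ⟨hch, hnb, removable_of_child_eq_empty_of_nbr_eq_empty hch hnb⟩
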